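/- arXiv:2310.01270 — 3 statements merged into one kernel-verified Lean document; each statement's English description precedes it below -/
import Mathlib

section
/- Let n ≥ 1 and let p be a permutation of {1,…,n}. Then, as an identity in ℤ[s,t]: (1+s)^{des(p)} (1+t)^{des(p^{-1})} = Σ_{x ∈ basis(p^{-1})} Σ_{u ∈ WI[n], Des(u) ⊆ Des(x)} s^{n − max(u)} t^{n − max(x)}, where max(w) denotes the maximum value of w. -/
namespace CayPaper

/-- A word of length `n` (1-indexed): it vanishes outside `{1,…,n}`. -/
def IsWord (n : ℕ) (v : ℕ → ℕ) : Prop := ∀ i, i ∉ Set.Icc 1 n → v i = 0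

/-- A Cayley permutation of length `n`: a word on `{1,…,n}` whose image is `{1,…,k}`
for some `k ≤ n`. -/
def IsCayley (n : ℕ) (v : ℕ → ℕ) : Prop :=
  IsWord n v ∧ ∃ k, v '' Set.Icc 1 n = Set.Icc 1 k

/-- A weakly increasing Cayley permutation of length `n`. -/
def IsWI (n : ℕ) (v : ℕ → ℕ) : Prop :=
  IsCayley n v ∧ MonotoneOn v (Set.Icc 1 n)

/-- A permutation of `{1,…,n}`, encoded as a word. -/
def IsPermWord (n : ℕ) (v : ℕ → ℕ) : Prop :=
  IsWord n v ∧ Set.BijOn v (Set.Icc 1 n) (Set.Icc 1 n)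

/-- The weak descent set `Des(v) = { i ∈ {1,…,n−1} : v(i) ≥ v(i+1) }`. -/
def desSet (n : ℕ) (v : ℕ → ℕ) : Finset ℕ :=
  (Finset.Icc 1 (n - 1)).filter fun i => v (i + 1) ≤ v i

/-- The strict descent set `Des∘(v) = { i : v(i) > v(i+1) }`. -/
def sdesSet (n : ℕ) (v : ℕ → ℕ) : Finset ℕ :=
  (Finset.Icc 1 (n - 1)).filter fun i => v (i + 1) < v i

/-- The weak ascent set `Asc(v) = { i : v(i) ≤ v(i+1) }`. -/
def ascSet (n : ℕ) (v : ℕ → ℕ) : Finset ℕ :=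
  (Finset.Icc 1 (n - 1)).filter fun i => v i ≤ v (i + 1)

/-- The strict ascent set `Asc∘(v) = { i : v(i) < v(i+1) }`. -/
def sascSet (n : ℕ) (v : ℕ → ℕ) : Finset ℕ :=
  (Finset.Icc 1 (n - 1)).filter fun i => v i < v (i + 1)

def des (n : ℕ) (v : ℕ → ℕ) : ℕ := (desSet n v).card
def sdes (n : ℕ) (v : ℕ → ℕ) : ℕ := (sdesSet n v).card
def asc (n : ℕ) (v : ℕ → ℕ) : ℕ := (ascSet n v).card
def sasc (n : ℕ) (v : ℕ → ℕ) : ℕ := (sascSet n v).card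

/-- The maximum value of a word. -/
def wmax (n : ℕ) (v : ℕ → ℕ) : ℕ := (Finset.Icc 1 n).sup v

/-- Reverse: `v^r(i) = v(n+1−i)`. -/
def wrev (n : ℕ) (v : ℕ → ℕ) : ℕ → ℕ := fun i =>
  if 1 ≤ i ∧ i ≤ n then v (n + 1 - i) else 0

/-- Complement: `v^c(i) = max(v)+1−v(i)`. -/
def wcomp (n : ℕ) (v : ℕ → ℕ) : ℕ → ℕ := fun i =>
  if 1 ≤ i ∧ i ≤ n then wmax n v + 1 - v i else 0

/-- The word `(σ(1), …, σ(n))` (1-indexed) of a permutation `σ` of `Fin n`. -/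
def permWord (n : ℕ) (σ : Equiv.Perm (Fin n)) : ℕ → ℕ := fun i =>
  if h : 1 ≤ i ∧ i ≤ n then ((σ ⟨i - 1, by omega⟩ : Fin n) : ℕ) + 1 else 0

/-- The conjugate of `u`: the unique weakly increasing Cayley permutation of
length `n` whose descent set is `{1,…,n−1} \ Des(u)`. -/
noncomputable def conjWI (n : ℕ) (u : ℕ → ℕ) : ℕ → ℕ :=
  haveI := Classical.dec (∃ w, IsWI n w ∧ desSet n w = Finset.Icc 1 (n - 1) \ desSet n u)
  if h : ∃ w, IsWI n w ∧ desSet n w = Finset.Icc 1 (n - 1) \ desSet n u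
    then h.choose else fun _ => 0

/-- A Burge matrix: every row and every column contains a nonzero entry. -/
def IsBurge {p q : ℕ} (M : Matrix (Fin p) (Fin q) ℕ) : Prop :=
  (∀ i, ∃ j, M i j ≠ 0) ∧ (∀ j, ∃ i, M i j ≠ 0)

/-- The size of a matrix with natural entries: the sum of its entries. -/
def matSize {p q : ℕ} (M : Matrix (Fin p) (Fin q) ℕ) : ℕ := ∑ i, ∑ j, M i j

/-- Burge matrices of size `n` (of all dimensions). -/
def BurgeMatrices (n : ℕ) : Set (Σ p : ℕ, Σ q : ℕ, Matrix (Fin p) (Fin q) ℕ) :=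
  {M | IsBurge M.2.2 ∧ matSize M.2.2 = n}

/-- Binary Burge matrices of size `n`. -/
def BinaryBurgeMatrices (n : ℕ) : Set (Σ p : ℕ, Σ q : ℕ, Matrix (Fin p) (Fin q) ℕ) :=
  {M | M ∈ BurgeMatrices n ∧ ∀ i j, M.2.2 i j ≤ 1}

/-- Burge matrices of size `n` whose every column sums to `1`. -/
def ColSumOneBurgeMatrices (n : ℕ) : Set (Σ p : ℕ, Σ q : ℕ, Matrix (Fin p) (Fin q) ℕ) :=
  {M | M ∈ BurgeMatrices n ∧ ∀ j, ∑ i, M.2.2 i j = 1}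

/-- Burge words: pairs `(u,v) ∈ WI[n] × Cay[n]` with `Des(u) ⊆ Des(v)`. -/
def BurPairs (n : ℕ) : Set ((ℕ → ℕ) × (ℕ → ℕ)) :=
  {p | IsWI n p.1 ∧ IsCayley n p.2 ∧ desSet n p.1 ⊆ desSet n p.2}

/-- Pairs `(u,v) ∈ WI[n] × Cay[n]` with `Des(u) ⊆ Des∘(v)`. -/
def BBurPairs (n : ℕ) : Set ((ℕ → ℕ) × (ℕ → ℕ)) :=
  {p | IsWI n p.1 ∧ IsCayley n p.2 ∧ desSet n p.1 ⊆ sdesSet n p.2}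

/-- Pairs `(u,v) ∈ WI[n] × S_n` with `Des(u) ⊆ Des(v)`. -/
def PBurPairs (n : ℕ) : Set ((ℕ → ℕ) × (ℕ → ℕ)) :=
  {p | IsWI n p.1 ∧ IsPermWord n p.2 ∧ desSet n p.1 ⊆ desSet n p.2}

/-- `Ω[n]`: pairs `(u,v) ∈ WI[n] × Cay[n]` with `Des(u) ⊇ Des(v)`. -/
def OmegaPairs (n : ℕ) : Set ((ℕ → ℕ) × (ℕ → ℕ)) :=
  {p | IsWI n p.1 ∧ IsCayley n p.2 ∧ desSet n p.2 ⊆ desSet n p.1}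

/-- `v` lists the positions `1,…,n` in the order obtained by sorting the columns
`(x_i, i)` so that first components are weakly increasing, ties broken by strictly
decreasing second components.  For a permutation word `v` this says exactly that
`v = Γ(id, x)`, the bottom row of the Burge transpose of `(id, x)`. -/
def sortsColumns (n : ℕ) (x v : ℕ → ℕ) : Prop :=
  ∀ i ∈ Finset.Icc 1 (n - 1),
    x (v i) < x (v (i + 1)) ∨ (x (v i) = x (v (i + 1)) ∧ v (i + 1) < v i)

/-- The Fishburn basis of a permutation word `v`:
`basis(v) = { x ∈ Cay[n] : Γ(id, x) = v }`. -/
def fishburnBasis (n : ℕ) (v : ℕ → ℕ) : Set (ℕ → ℕ) :=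
  {x | IsCayley n x ∧ sortsColumns n x v}

/-- Stanley's `v`-compatibility condition:
`x(v(1)) ≤ ⋯ ≤ x(v(n))` with strict inequality at every ascent of `v`. -/
def VCompatible (n : ℕ) (v x : ℕ → ℕ) : Prop :=
  (∀ i ∈ Finset.Icc 1 (n - 1), x (v i) ≤ x (v (i + 1))) ∧
    ∀ i ∈ Finset.Icc 1 (n - 1), v i < v (i + 1) → x (v i) < x (v (i + 1))

/-- A map `{1,…,n} → {1,…,m}`, encoded as a word. -/
def IsMapTo (n m : ℕ) (x : ℕ → ℕ) : Prop :=
  IsWord n x ∧ ∀ i ∈ Set.Icc 1 n, x i ∈ Set.Icc 1 m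

/-- Weakly increasing maps `{1,…,n} → {1,…,m}`. -/
def WIgen (n m : ℕ) : Set (ℕ → ℕ) :=
  {u | IsMapTo n m u ∧ MonotoneOn u (Set.Icc 1 n)}


/-!
Let `p` be the word of `σ` and `v = p⁻¹`. Precomposition `y ↦ y ∘ p` maps the weakly
increasing Cayley permutations `y` with `Des(y) ⊆ Des(v)` bijectively onto `basis(v)`,
preserves the maximum, and gives `Des(y ∘ p) = Des(p)`: a tie `y(p i) = y(p (i+1))` with
`p i < p (i+1)` would make `v` weakly decrease from `p i` to `p (i+1)`.
A weakly increasing Cayley permutation `u` is determined by its descent set `S`, which can be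
any subset of `{1,…,n−1}`, and `n − max(u) = |S|`. So both sums run over subsets of a
descent set and are the binomial expansions of `(1+s)^{des p}` and `(1+t)^{des v}`.
-/

open Finset

lemma exists_apply_eq_of_le_add_one {f : ℕ → ℕ} {a b m : ℕ}
    (hf : ∀ j, a ≤ j → j < b → f (j + 1) ≤ f j + 1)
    (hab : a ≤ b) (ham : f a ≤ m) (hmb : m ≤ f b) : ∃ j ∈ Set.Icc a b, f j = m := by
  induction b, hab using Nat.le_induction with
  | base => exact ⟨a, ⟨le_rfl, le_rfl⟩, by omega⟩
  | succ b hab ih =>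
    by_cases hm : m ≤ f b
    · obtain ⟨j, ⟨haj, hjb⟩, hj⟩ := ih (fun j hj hjb => hf j hj (by omega)) hm
      exact ⟨j, ⟨haj, hjb.trans b.le_succ⟩, hj⟩
    · exact ⟨b + 1, ⟨hab.trans b.le_succ, le_rfl⟩, by have := hf b hab (by omega); omega⟩

section WeaklyIncreasing

variable {n : ℕ} {S D : Finset ℕ} {u : ℕ → ℕ}

/-- The weakly increasing Cayley permutation of length `n` with descent set `S`. -/
def wiOfDesSet (n : ℕ) (S : Finset ℕ) : ℕ → ℕ := fun j =>
  if 1 ≤ j ∧ j ≤ n then #(Ico 1 j \ S) + 1 else 0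

lemma wiOfDesSet_one (hn : 1 ≤ n) : wiOfDesSet n S 1 = 1 := by
  simp [wiOfDesSet, hn]

lemma wiOfDesSet_succ {j : ℕ} (hj : 1 ≤ j) (hjn : j + 1 ≤ n) :
    wiOfDesSet n S (j + 1) = wiOfDesSet n S j + if j ∈ S then 0 else 1 := by
  simp only [wiOfDesSet, if_pos (And.intro hj (by omega : j ≤ n)),
    if_pos (And.intro (by omega : 1 ≤ j + 1) hjn), Nat.Ico_succ_right_eq_insert_Ico hj]
  split_ifs with hjS
  · rw [insert_sdiff_of_mem _ hjS, add_zero]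
  · rw [insert_sdiff_of_notMem _ hjS, card_insert_of_notMem (by simp), add_right_comm]

lemma monotoneOn_wiOfDesSet : MonotoneOn (wiOfDesSet n S) (Set.Icc 1 n) :=
  monotoneOn_of_le_add_one Set.ordConnected_Icc fun j _ hj hj' => by
    rw [wiOfDesSet_succ hj.1 hj'.2]
    exact Nat.le_add_right _ _

lemma desSet_wiOfDesSet (hS : S ⊆ Icc 1 (n - 1)) : desSet n (wiOfDesSet n S) = S := by
  ext i
  simp only [desSet, mem_filter, mem_Icc]
  constructor
  · rintro ⟨⟨hi, hin⟩, hle⟩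
    rw [wiOfDesSet_succ hi (by omega)] at hle
    by_contra hiS
    simp [hiS] at hle
  · intro hiS
    obtain ⟨hi, hin⟩ := mem_Icc.mp (hS hiS)
    rw [wiOfDesSet_succ hi (by omega), if_pos hiS]
    exact ⟨⟨hi, hin⟩, le_rfl⟩

lemma card_add_wiOfDesSet_last (hS : S ⊆ Icc 1 (n - 1)) (hn : 1 ≤ n) :
    #S + wiOfDesSet n S n = n := by
  have hS' : S ⊆ Ico 1 n := fun i hi => by have := mem_Icc.mp (hS hi); simp; omega
  simp only [wiOfDesSet, if_pos (And.intro hn le_rfl), card_sdiff_of_subset hS', Nat.card_Ico]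
  have := card_le_card hS'
  rw [Nat.card_Ico] at this
  omega

lemma isWI_wiOfDesSet (hn : 1 ≤ n) : IsWI n (wiOfDesSet n S) := by
  refine ⟨⟨fun j hj => if_neg hj, wiOfDesSet n S n, ?_⟩, monotoneOn_wiOfDesSet⟩
  apply Set.Subset.antisymm
  · rintro _ ⟨j, hj, rfl⟩
    refine ⟨?_, monotoneOn_wiOfDesSet hj ⟨hn, le_rfl⟩ hj.2⟩
    rw [wiOfDesSet, if_pos (Set.mem_Icc.mp hj)]
    exact Nat.le_add_left _ _
  · intro m hm
    have hstep : ∀ j, 1 ≤ j → j < n → wiOfDesSet n S (j + 1) ≤ wiOfDesSet n S j + 1 :=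
      fun j hj hjn => by rw [wiOfDesSet_succ hj hjn]; split_ifs <;> omega
    obtain ⟨j, hj, rfl⟩ := exists_apply_eq_of_le_add_one hstep hn
      (by rw [wiOfDesSet_one hn]; exact hm.1) hm.2
    exact ⟨j, hj, rfl⟩

namespace IsWI

lemma apply_one (hu : IsWI n u) (hn : 1 ≤ n) : u 1 = 1 := by
  obtain ⟨k, hk⟩ := hu.1.2
  have h1 : u 1 ∈ Set.Icc 1 k := hk ▸ Set.mem_image_of_mem u ⟨le_rfl, hn⟩
  obtain ⟨i, hi, hui⟩ : 1 ∈ u '' Set.Icc 1 n := hk ▸ ⟨le_rfl, h1.1.trans h1.2⟩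
  have := hu.2 ⟨le_rfl, hn⟩ hi hi.1
  have := h1.1
  omega

lemma apply_succ (hu : IsWI n u) {j : ℕ} (hj : 1 ≤ j) (hjn : j + 1 ≤ n) :
    u (j + 1) = u j + if j ∈ desSet n u then 0 else 1 := by
  have hj' : j ∈ Set.Icc 1 n := ⟨hj, by omega⟩
  have hj1 : j + 1 ∈ Set.Icc 1 n := ⟨by omega, hjn⟩
  have hle := hu.2 hj' hj1 (by omega)
  have hdes : j ∈ desSet n u ↔ u (j + 1) ≤ u j := by
    simp only [desSet, mem_filter, mem_Icc]; omega
  split_ifs with h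
  · have := hdes.mp h; omega
  -- Cayley permutations skip no value, so `u` cannot jump past `u j + 1`.
  obtain ⟨k, hk⟩ := hu.1.2
  by_contra hjump
  have hmem : u j + 1 ∈ Set.Icc 1 k := by
    obtain ⟨-, hk1⟩ := (hk ▸ Set.mem_image_of_mem u hj1 : u (j + 1) ∈ Set.Icc 1 k)
    have := hdes.not.mp h
    exact ⟨by omega, by omega⟩
  obtain ⟨i, hi, hui⟩ : u j + 1 ∈ u '' Set.Icc 1 n := hk ▸ hmem
  rcases le_or_gt i j with hij | hij
  · have := hu.2 hi hj' hij; omega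
  · have := hu.2 hj1 hi hij; have := hdes.not.mp h; omega

lemma eq_wiOfDesSet (hu : IsWI n u) (hn : 1 ≤ n) : u = wiOfDesSet n (desSet n u) := by
  funext j
  by_cases hj : 1 ≤ j ∧ j ≤ n
  · obtain ⟨hj, hjn⟩ := hj
    induction j, hj using Nat.le_induction with
    | base => rw [hu.apply_one hn, wiOfDesSet_one hn]
    | succ j hj ih =>
      rw [hu.apply_succ hj hjn, wiOfDesSet_succ hj hjn, ih (by omega)]
  · rw [hu.1.1 j hj, wiOfDesSet, if_neg hj]

lemma card_desSet_add_wmax (hu : IsWI n u) (hn : 1 ≤ n) : #(desSet n u) + wmax n u = n := by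
  have hmax : wmax n u = u n :=
    le_antisymm (Finset.sup_le fun j hj => hu.2 (by simpa using hj) ⟨hn, le_rfl⟩ (mem_Icc.mp hj).2)
      (le_sup (f := u) (mem_Icc.mpr ⟨hn, le_rfl⟩))
  have hD : desSet n u ⊆ Icc 1 (n - 1) := filter_subset _ _
  rw [hmax, hu.eq_wiOfDesSet hn, desSet_wiOfDesSet hD]
  exact card_add_wiOfDesSet_last hD hn

end IsWI

lemma bijOn_desSet_isWI (hn : 1 ≤ n) (hD : D ⊆ Icc 1 (n - 1)) :
    Set.BijOn (desSet n) {u | IsWI n u ∧ desSet n u ⊆ D} ↑D.powerset := by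
  refine ⟨fun u hu => mem_powerset.mpr hu.2, fun u hu u' hu' h => ?_, fun S hS => ?_⟩
  · rw [hu.1.eq_wiOfDesSet hn, hu'.1.eq_wiOfDesSet hn, h]
  · have hS' : S ⊆ Icc 1 (n - 1) := (mem_powerset.mp hS).trans hD
    refine ⟨wiOfDesSet n S, ⟨isWI_wiOfDesSet hn, ?_⟩, desSet_wiOfDesSet hS'⟩
    rw [desSet_wiOfDesSet hS']
    exact mem_powerset.mp hS

lemma finsum_mem_isWI_pow_mul {R : Type*} [CommSemiring R] (hn : 1 ≤ n)
    (hD : D ⊆ Icc 1 (n - 1)) (a c : R) :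
    ∑ᶠ u ∈ {u | IsWI n u ∧ desSet n u ⊆ D}, a ^ (n - wmax n u) * c = (1 + a) ^ #D * c := by
  have hexp : ∀ u ∈ {u | IsWI n u ∧ desSet n u ⊆ D}, n - wmax n u = #(desSet n u) :=
    fun u hu => by have := hu.1.card_desSet_add_wmax hn; omega
  rw [finsum_mem_congr rfl fun u hu => by rw [hexp u hu],
    finsum_mem_eq_of_bijOn (desSet n) (bijOn_desSet_isWI hn hD) (g := fun S => a ^ #S * c)
      fun _ _ => rfl, finsum_mem_coe_finset, ← sum_mul]
  simpa [add_comm] using congrArg (· * c) (sum_pow_mul_eq_add_pow a 1 D)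

end WeaklyIncreasing

section FishburnBasis

variable {n : ℕ} {σ : Equiv.Perm (Fin n)} {i : ℕ}

lemma permWord_of_notMem (hi : i ∉ Set.Icc 1 n) : permWord n σ i = 0 := dif_neg hi

lemma permWord_mem_Icc (hi : i ∈ Set.Icc 1 n) : permWord n σ i ∈ Set.Icc 1 n := by
  obtain ⟨hi1, hin⟩ := hi
  have := (σ ⟨i - 1, by omega⟩).isLt
  simp only [permWord, dif_pos (And.intro hi1 hin), Set.mem_Icc]
  omega

lemma permWord_inv_permWord (hi : i ∈ Set.Icc 1 n) : permWord n σ⁻¹ (permWord n σ i) = i := by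
  obtain ⟨hi1, hin⟩ := hi
  have hlt := (σ ⟨i - 1, by omega⟩).isLt
  have hσ : permWord n σ i = (σ ⟨i - 1, by omega⟩ : ℕ) + 1 := dif_pos ⟨hi1, hin⟩
  rw [hσ, permWord, dif_pos ⟨by omega, by omega⟩]
  simp [Equiv.Perm.inv_def]
  omega

lemma permWord_permWord_inv (hi : i ∈ Set.Icc 1 n) : permWord n σ (permWord n σ⁻¹ i) = i := by
  simpa using permWord_inv_permWord (σ := σ⁻¹) hi

lemma isPermWord_permWord : IsPermWord n (permWord n σ) := by
  refine ⟨fun i hi => permWord_of_notMem hi, Set.InvOn.bijOn (f' := permWord n σ⁻¹) ⟨?_, ?_⟩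
    (fun i hi => permWord_mem_Icc hi) (fun i hi => permWord_mem_Icc hi)⟩
  · exact fun i hi => permWord_inv_permWord hi
  · exact fun i hi => permWord_permWord_inv hi

lemma wmax_comp_permWord (y : ℕ → ℕ) : wmax n (y ∘ permWord n σ) = wmax n y := by
  have himage : (Icc 1 n).image (permWord n σ) = Icc 1 n :=
    coe_injective (by push_cast; exact isPermWord_permWord.2.image_eq)
  rw [wmax, ← sup_image, himage, wmax]

/-- A tie `y a = y b` of a weakly increasing word forces descents of `y`, hence of `v`, at every
step between `a` and `b`. -/
lemma apply_le_apply_of_desSet_subset {y v : ℕ → ℕ} (hy : MonotoneOn y (Set.Icc 1 n))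
    (hD : desSet n y ⊆ desSet n v) {a b : ℕ} (ha : 1 ≤ a) (hab : a ≤ b) (hb : b ≤ n)
    (h : y a = y b) : v b ≤ v a := by
  have hanti : AntitoneOn v (Set.Icc a b) :=
    antitoneOn_of_add_one_le Set.ordConnected_Icc fun j _ ⟨haj, hjb⟩ ⟨_, hjb'⟩ => by
      have hyj : y (j + 1) ≤ y j := by
        have := hy ⟨by omega, by omega⟩ ⟨by omega, hb⟩ hjb'
        have := hy ⟨ha, by omega⟩ ⟨by omega, by omega⟩ haj
        omega
      exact (mem_filter.mp (hD (mem_filter.mpr ⟨mem_Icc.mpr ⟨by omega, by omega⟩, hyj⟩))).2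
  exact hanti ⟨le_rfl, hab⟩ ⟨hab, le_rfl⟩ hab

lemma desSet_comp_permWord {y : ℕ → ℕ} (hy : MonotoneOn y (Set.Icc 1 n))
    (hD : desSet n y ⊆ desSet n (permWord n σ⁻¹)) :
    desSet n (y ∘ permWord n σ) = desSet n (permWord n σ) := by
  ext i
  simp only [desSet, mem_filter, mem_Icc, Function.comp_apply]
  refine and_congr_right fun hi => ⟨fun hle => ?_, fun hle => ?_⟩
  · have hi₀ : i ∈ Set.Icc 1 n := ⟨hi.1, by omega⟩
    have hi₁ : i + 1 ∈ Set.Icc 1 n := ⟨by omega, by omega⟩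
    have ha := permWord_mem_Icc (σ := σ) hi₀
    have hb := permWord_mem_Icc (σ := σ) hi₁
    by_contra hlt
    have := apply_le_apply_of_desSet_subset hy hD ha.1 (by omega) hb.2
      (le_antisymm (hy ha hb (by omega)) hle)
    rw [permWord_inv_permWord hi₀, permWord_inv_permWord hi₁] at this
    omega
  · exact hy (permWord_mem_Icc ⟨by omega, by omega⟩) (permWord_mem_Icc ⟨hi.1, by omega⟩) hle

lemma IsPermWord.isWI_comp_of_mem_fishburnBasis {v x : ℕ → ℕ} (hv : IsPermWord n v)
    (hx : x ∈ fishburnBasis n v) : IsWI n (x ∘ v) ∧ desSet n (x ∘ v) ⊆ desSet n v := by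
  obtain ⟨⟨hword, k, hk⟩, hsort⟩ := hx
  refine ⟨⟨⟨fun j hj => ?_, k, ?_⟩, ?_⟩, fun i hi => ?_⟩
  · rw [Function.comp_apply, hv.1 j hj, hword 0 (by simp)]
  · rw [Set.image_comp, hv.2.image_eq, hk]
  · refine monotoneOn_of_le_add_one Set.ordConnected_Icc fun j _ ⟨hj, _⟩ ⟨_, hjn⟩ => ?_
    rcases hsort j (mem_Icc.mpr ⟨hj, by omega⟩) with hlt | ⟨heq, -⟩
    exacts [hlt.le, heq.le]
  · obtain ⟨hi, hle⟩ := mem_filter.mp hi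
    refine mem_filter.mpr ⟨hi, ?_⟩
    rcases hsort i hi with hlt | ⟨-, hlt⟩
    exacts [absurd hle (not_le.mpr hlt), hlt.le]

lemma bijOn_comp_permWord :
    Set.BijOn (· ∘ permWord n σ) {y | IsWI n y ∧ desSet n y ⊆ desSet n (permWord n σ⁻¹)}
      (fishburnBasis n (permWord n σ⁻¹)) := by
  refine ⟨fun y ⟨hy, hD⟩ => ?_, fun y hy y' hy' h => funext fun j => ?_, fun x hx => ?_⟩
  · obtain ⟨⟨hword, k, hk⟩, hmono⟩ := hy
    refine ⟨⟨fun j hj => ?_, k, ?_⟩, fun i hi => ?_⟩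
    · show y (permWord n σ j) = 0
      rw [permWord_of_notMem hj, hword 0 (by simp)]
    · rw [Set.image_comp, isPermWord_permWord.2.image_eq, hk]
    have hi₀ : i ∈ Set.Icc 1 n := by have := mem_Icc.mp hi; exact ⟨this.1, by omega⟩
    have hi₁ : i + 1 ∈ Set.Icc 1 n := by have := mem_Icc.mp hi; exact ⟨by omega, by omega⟩
    simp only [Function.comp_apply, permWord_permWord_inv hi₀, permWord_permWord_inv hi₁]
    rcases (hmono hi₀ hi₁ (by omega)).lt_or_eq with hlt | heq
    · exact Or.inl hlt
    refine Or.inr ⟨heq, lt_of_le_of_ne ?_ fun h => ?_⟩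
    · exact (mem_filter.mp (hD (mem_filter.mpr ⟨hi, heq.ge⟩))).2
    · have := (isPermWord_permWord (σ := σ⁻¹)).2.injOn hi₁ hi₀ h
      omega
  · by_cases hj : j ∈ Set.Icc 1 n
    · simpa [permWord_permWord_inv hj] using congrFun h (permWord n σ⁻¹ j)
    · rw [hy.1.1.1 j hj, hy'.1.1.1 j hj]
  · refine ⟨x ∘ permWord n σ⁻¹, isPermWord_permWord.isWI_comp_of_mem_fishburnBasis hx,
      funext fun j => ?_⟩
    by_cases hj : j ∈ Set.Icc 1 n
    · simp [permWord_inv_permWord hj]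
    · have hx0 := hx.1.1
      have h0 : (0 : ℕ) ∉ Set.Icc 1 n := by simp
      simp [permWord_of_notMem hj, permWord_of_notMem h0, hx0 j hj, hx0 0 h0]

end FishburnBasis

/-- Proposition 6.4: for a permutation `p`,
`(1+s)^{des(p)} (1+t)^{des(p⁻¹)} =
 Σ_{x ∈ basis(p⁻¹)} Σ_{u ∈ WI(x)} s^{n−max(u)} t^{n−max(x)}` in `ℤ[s,t]`. -/
theorem stmt12 (n : ℕ) (hn : 1 ≤ n) (σ : Equiv.Perm (Fin n)) :
    (1 + MvPolynomial.X 0 : MvPolynomial (Fin 2) ℤ) ^ des n (permWord n σ) *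
        (1 + MvPolynomial.X 1) ^ des n (permWord n σ⁻¹)
      = ∑ᶠ x ∈ fishburnBasis n (permWord n σ⁻¹),
          ∑ᶠ u ∈ {u : ℕ → ℕ | IsWI n u ∧ desSet n u ⊆ desSet n x},
            (MvPolynomial.X 0 : MvPolynomial (Fin 2) ℤ) ^ (n - wmax n u) *
              MvPolynomial.X 1 ^ (n - wmax n x) := by
  set s : MvPolynomial (Fin 2) ℤ := MvPolynomial.X 0
  set t : MvPolynomial (Fin 2) ℤ := MvPolynomial.X 1
  have hDesSet : ∀ w, desSet n w ⊆ Icc 1 (n - 1) := fun w => filter_subset _ _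
  rw [← finsum_mem_eq_of_bijOn _ bijOn_comp_permWord fun _ _ => rfl]
  calc (1 + s) ^ des n (permWord n σ) * (1 + t) ^ des n (permWord n σ⁻¹)
      = ∑ᶠ y ∈ {y | IsWI n y ∧ desSet n y ⊆ desSet n (permWord n σ⁻¹)},
          t ^ (n - wmax n y) * (1 + s) ^ des n (permWord n σ) := by
        rw [finsum_mem_isWI_pow_mul hn (hDesSet _), mul_comm, des]
    _ = _ := finsum_mem_congr rfl fun y ⟨hy, hD⟩ => by
        rw [desSet_comp_permWord hy.2 hD, wmax_comp_permWord,
          finsum_mem_isWI_pow_mul hn (hDesSet _), mul_comm, des]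

end CayPaper
end

section
/- Let n ≥ 1, let v be a permutation of {1,…,n}, and let x be a Cayley permutation of length n. Then x belongs to the Fishburn basis of v if and only if x is v-compatible, i.e. x(v(1)) ≤ x(v(2)) ≤ ⋯ ≤ x(v(n)) and x(v(i)) < x(v(i+1)) for every i with v(i) < v(i+1). In other words, the Fishburn basis of v is the set of v-compatible maps that are Cayley permutations. -/
namespace CayPaper

lemma permWord_ne (n : ℕ) (σ : Equiv.Perm (Fin n)) {i : ℕ}
    (h1 : 1 ≤ i) (h2 : i + 1 ≤ n) :
    permWord n σ i ≠ permWord n σ (i + 1) := by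
  have hi : 1 ≤ i ∧ i ≤ n := ⟨h1, by omega⟩
  have hi1 : 1 ≤ i + 1 ∧ i + 1 ≤ n := ⟨by omega, h2⟩
  simp only [permWord, dif_pos hi, dif_pos hi1]
  intro h
  have h2 : ((σ ⟨i - 1, by omega⟩ : Fin n) : ℕ) = ((σ ⟨i + 1 - 1, by omega⟩ : Fin n) : ℕ) := by omega
  have := σ.injective (Fin.ext h2)
  simp only [Fin.mk.injEq] at this
  omega

/-- Corollary 7.3: the Fishburn basis of a permutation `v` is the set of
`v`-compatible maps that are Cayley permutations. -/
theorem stmt15 (n : ℕ) (hn : 1 ≤ n) (σ : Equiv.Perm (Fin n)) (x : ℕ → ℕ)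
    (hx : IsCayley n x) :
    x ∈ fishburnBasis n (permWord n σ) ↔ VCompatible n (permWord n σ) x := by
  set v := permWord n σ with hv
  constructor
  · rintro ⟨-, hs⟩
    refine ⟨fun i hi => ?_, fun i hi hasc => ?_⟩
    · rcases hs i hi with h | ⟨h, -⟩ <;> omega
    · rcases hs i hi with h | ⟨-, h⟩ <;> omega
  · rintro ⟨hw, hstrict⟩
    refine ⟨hx, fun i hi => ?_⟩
    have hle := hw i hi
    rcases lt_or_eq_of_le hle with h | h
    · exact Or.inl h
    · refine Or.inr ⟨h, ?_⟩
      simp only [Finset.mem_Icc] at hi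
      have hne := permWord_ne n σ hi.1 (by omega)
      rcases lt_trichotomy (v i) (v (i + 1)) with hlt | heq | hgt
      · exact absurd h (by have := hstrict i (by simp [Finset.mem_Icc]; omega) hlt; omega)
      · exact absurd heq hne
      · exact hgt

end CayPaper
end

section
/- Let n ≥ 1, let v be a Cayley permutation of length n, and let m ≥ 0. Then the number of weakly increasing maps u : {1,…,n} → {1,…,m} with Des(u) ⊆ Des(v) equals the binomial coefficient C(n + m − asc∘(v) − 1, n), and the number of weakly increasing maps u : {1,…,n} → {1,…,m} with Des(u) ⊆ Des∘(v) equals C(n + m − asc(v) − 1, n). -/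
theorem monotoneOn_Icc_iff_le_succ {β : Type*} [Preorder β] {f : ℕ → β} {a b : ℕ} :
    MonotoneOn f (Set.Icc a b) ↔ ∀ i, a ≤ i → i + 1 ≤ b → f i ≤ f (i + 1) := by
  refine ⟨fun hf i hai hib => hf ⟨hai, by omega⟩ ⟨by omega, hib⟩ (by omega), fun h => ?_⟩
  refine monotoneOn_of_le_succ Set.ordConnected_Icc fun i _ hi hi' => ?_
  rw [Order.succ_eq_add_one] at hi' ⊢
  exact h i hi.1 hi'.2

theorem strictMonoOn_Icc_iff_lt_succ {β : Type*} [Preorder β] {f : ℕ → β} {a b : ℕ} :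
    StrictMonoOn f (Set.Icc a b) ↔ ∀ i, a ≤ i → i + 1 ≤ b → f i < f (i + 1) := by
  refine ⟨fun hf i hai hib => hf ⟨hai, by omega⟩ ⟨by omega, hib⟩ (by omega), fun h => ?_⟩
  refine strictMonoOn_of_lt_succ Set.ordConnected_Icc fun i _ hi hi' => ?_
  rw [Order.succ_eq_add_one] at hi' ⊢
  exact h i hi.1 hi'.2

theorem MonotoneOn.mapsTo_Icc_iff {α β : Type*} [Preorder α] [Preorder β] {f : α → β}
    {p q : α} {a b : β} (hpq : p ≤ q) (hf : MonotoneOn f (Set.Icc p q)) :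
    Set.MapsTo f (Set.Icc p q) (Set.Icc a b) ↔ a ≤ f p ∧ f q ≤ b := by
  have hp : p ∈ Set.Icc p q := ⟨le_rfl, hpq⟩
  have hq : q ∈ Set.Icc p q := ⟨hpq, le_rfl⟩
  refine ⟨fun h => ⟨(h hp).1, (h hq).2⟩, fun ⟨ha, hb⟩ x hx => ?_⟩
  exact ⟨ha.trans (hf hp hx hx.1), (hf hx hq hx.2).trans hb⟩

theorem StrictMonoOn.le_apply_of_one_le {w : ℕ → ℕ} {n : ℕ} (hw : StrictMonoOn w (Set.Icc 1 n))
    (h1 : 1 ≤ w 1) {i : ℕ} (hi : i ∈ Set.Icc 1 n) : i ≤ w i := by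
  obtain ⟨hi1, hin⟩ := hi
  induction i, hi1 using Nat.le_induction with
  | base => exact h1
  | succ i hi1 ih =>
    have := hw ⟨hi1, by omega⟩ ⟨by omega, hin⟩ (Nat.lt_succ_self i)
    have := ih (by omega)
    omega

theorem card_image_Icc_of_strictMonoOn {β : Type*} [LinearOrder β] {w : ℕ → β} {n : ℕ}
    (hw : StrictMonoOn w (Set.Icc 1 n)) : ((Finset.Icc 1 n).image w).card = n := by
  rw [Finset.card_image_of_injOn (by simpa using hw.injOn), Nat.card_Icc, Nat.add_sub_cancel]

theorem StrictMonoOn.apply_succ_eq_orderEmbOfFin {β : Type*} [LinearOrder β] {w : ℕ → β} {n : ℕ}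
    (hw : StrictMonoOn w (Set.Icc 1 n)) (k : Fin n) :
    w (k + 1) = ((Finset.Icc 1 n).image w).orderEmbOfFin (card_image_Icc_of_strictMonoOn hw) k := by
  refine congrFun (Finset.orderEmbOfFin_unique (f := fun k : Fin n => w (k + 1))
    (card_image_Icc_of_strictMonoOn hw) (fun k => ?_) fun k l hkl => ?_) k
  · exact Finset.mem_image_of_mem w (by simp)
  · exact hw ⟨by omega, by omega⟩ ⟨by omega, by omega⟩ (Nat.add_lt_add_right hkl 1)

namespace CayPaper

def strictWords (n M : ℕ) : Set (ℕ → ℕ) :=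
  {w | IsMapTo n M w ∧ StrictMonoOn w (Set.Icc 1 n)}

theorem bijOn_image_strictWords (n M : ℕ) :
    Set.BijOn (fun w => (Finset.Icc 1 n).image w) (strictWords n M)
      (Finset.powersetCard n (Finset.Icc 1 M)) := by
  refine ⟨fun w ⟨⟨_, hmaps⟩, (hw : StrictMonoOn w _)⟩ => ?_,
    fun w ⟨⟨hword, _⟩, (hw : StrictMonoOn w _)⟩ w' ⟨⟨hword', _⟩, (hw' : StrictMonoOn w' _)⟩ heq =>
      ?_,
    fun s hs => ?_⟩
  · refine Finset.mem_powersetCard.2 ⟨fun x hx => ?_, card_image_Icc_of_strictMonoOn hw⟩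
    obtain ⟨i, hi, rfl⟩ := Finset.mem_image.1 hx
    simpa using hmaps i (by simpa using hi)
  · funext i
    by_cases hi : i ∈ Set.Icc 1 n
    · obtain ⟨k, rfl⟩ : ∃ k : Fin n, i = k + 1 := ⟨⟨i - 1, by grind⟩, by grind⟩
      rw [hw.apply_succ_eq_orderEmbOfFin, hw'.apply_succ_eq_orderEmbOfFin]
      simp only [heq]
    · rw [hword i hi, hword' i hi]
  · obtain ⟨hsub, hcard⟩ := Finset.mem_powersetCard.1 hs
    let e := s.orderEmbOfFin hcard
    let w : ℕ → ℕ := fun i => if h : 1 ≤ i ∧ i ≤ n then e ⟨i - 1, by omega⟩ else 0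
    have he : ∀ i (h : i ∈ Set.Icc 1 n), w i = e ⟨i - 1, by grind⟩ := fun i h => dif_pos h
    have hw : StrictMonoOn w (Set.Icc 1 n) := fun i hi j hj hij => by
      rw [he i hi, he j hj]
      exact e.strictMono (by simp only [Fin.lt_def]; grind)
    have himage : (Finset.Icc 1 n).image w ⊆ s := fun x hx => by
      obtain ⟨i, hi, rfl⟩ := Finset.mem_image.1 hx
      rw [he i (by simpa using hi)]
      exact s.orderEmbOfFin_mem hcard _
    refine ⟨w, ⟨⟨fun i hi => dif_neg (by simpa using hi), fun i hi => ?_⟩, hw⟩,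
      Finset.eq_of_subset_of_card_le himage (by rw [hcard, card_image_Icc_of_strictMonoOn hw])⟩
    simpa using hsub (himage (Finset.mem_image_of_mem w (by simpa using hi)))

theorem ncard_strictWords (n M : ℕ) : (strictWords n M).ncard = M.choose n := by
  rw [(bijOn_image_strictWords n M).ncard_eq, Set.ncard_coe_finset, Finset.card_powersetCard,
    Nat.card_Icc, Nat.add_sub_cancel]

def weakStepCount (T : Finset ℕ) (i : ℕ) : ℕ := (Finset.Ico 1 i \ T).card

theorem weakStepCount_one (T : Finset ℕ) : weakStepCount T 1 = 0 := by
  simp [weakStepCount]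

theorem weakStepCount_le (T : Finset ℕ) (i : ℕ) : weakStepCount T i ≤ i - 1 :=
  (Finset.card_le_card Finset.sdiff_subset).trans (Nat.card_Ico 1 i).le

theorem weakStepCount_succ (T : Finset ℕ) {i : ℕ} (hi : 1 ≤ i) :
    weakStepCount T (i + 1) = weakStepCount T i + if i ∈ T then 0 else 1 := by
  have hnot : i ∉ Finset.Ico 1 i \ T := by simp
  rw [weakStepCount, weakStepCount, Nat.Ico_succ_right_eq_insert_Ico hi]
  split_ifs with hiT
  · rw [Finset.insert_sdiff_of_mem _ hiT, Nat.add_zero]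
  · rw [Finset.insert_sdiff_of_notMem _ hiT, Finset.card_insert_of_notMem hnot]

theorem weakStepCount_of_subset {T : Finset ℕ} {n : ℕ} (hT : T ⊆ Finset.Icc 1 (n - 1)) :
    weakStepCount T n = n - 1 - T.card := by
  have hT' : T ⊆ Finset.Ico 1 n := hT.trans fun x hx => by simp at hx ⊢; omega
  rw [weakStepCount, Finset.card_sdiff_of_subset hT', Nat.card_Ico]

noncomputable def stretch (n : ℕ) (T : Finset ℕ) (u : ℕ → ℕ) : ℕ → ℕ :=
  (Set.Icc 1 n).indicator fun i => u i + weakStepCount T i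

noncomputable def unstretch (n : ℕ) (T : Finset ℕ) (w : ℕ → ℕ) : ℕ → ℕ :=
  (Set.Icc 1 n).indicator fun i => w i - weakStepCount T i

section Stretch

variable {n m : ℕ} {T : Finset ℕ} {u : ℕ → ℕ}

theorem stretch_apply {i : ℕ} (hi : i ∈ Set.Icc 1 n) :
    stretch n T u i = u i + weakStepCount T i :=
  Set.indicator_of_mem hi _

theorem isWord_stretch : IsWord n (stretch n T u) := fun _ hi => Set.indicator_of_notMem hi _

theorem stretch_injOn : Set.InjOn (stretch n T) {u | IsWord n u} := by
  intro u hu u' hu' h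
  funext i
  by_cases hi : i ∈ Set.Icc 1 n
  · have := congrFun h i
    rw [stretch_apply hi, stretch_apply hi] at this
    omega
  · rw [hu i hi, hu' i hi]

theorem stretch_lt_stretch_succ_iff {i : ℕ} (h1 : 1 ≤ i) (h2 : i + 1 ≤ n) :
    stretch n T u i < stretch n T u (i + 1) ↔ u i ≤ u (i + 1) ∧ (i ∈ T → u i < u (i + 1)) := by
  rw [stretch_apply ⟨h1, by omega⟩, stretch_apply ⟨by omega, h2⟩, weakStepCount_succ T h1]
  by_cases hiT : i ∈ T <;> simp [hiT] <;> omega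

theorem strictMonoOn_stretch_iff (hT : T ⊆ Finset.Icc 1 (n - 1)) :
    StrictMonoOn (stretch n T u) (Set.Icc 1 n) ↔
      MonotoneOn u (Set.Icc 1 n) ∧ ∀ i ∈ T, u i < u (i + 1) := by
  rw [strictMonoOn_Icc_iff_lt_succ, monotoneOn_Icc_iff_le_succ]
  refine ⟨fun h => ⟨fun i h1 h2 => ((stretch_lt_stretch_succ_iff h1 h2).1 (h i h1 h2)).1,
    fun i hiT => ?_⟩, fun ⟨hmono, hstrict⟩ i h1 h2 =>
      (stretch_lt_stretch_succ_iff h1 h2).2 ⟨hmono i h1 h2, hstrict i⟩⟩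
  have hi := Finset.mem_Icc.1 (hT hiT)
  exact ((stretch_lt_stretch_succ_iff hi.1 (by omega)).1 (h i hi.1 (by omega))).2 hiT

theorem stretch_mem_strictWords_iff (hT : T ⊆ Finset.Icc 1 (n - 1))
    (hu : IsWord n u) :
    stretch n T u ∈ strictWords n (n + m - T.card - 1) ↔
      u ∈ WIgen n m ∧ ∀ i ∈ T, u i < u (i + 1) := by
  have hcard : T.card ≤ n - 1 := by simpa using Finset.card_le_card hT
  have hranges (hmono : MonotoneOn u (Set.Icc 1 n))
      (hs : StrictMonoOn (stretch n T u) (Set.Icc 1 n)) :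
      Set.MapsTo (stretch n T u) (Set.Icc 1 n) (Set.Icc 1 (n + m - T.card - 1)) ↔
        Set.MapsTo u (Set.Icc 1 n) (Set.Icc 1 m) := by
    rcases Nat.eq_zero_or_pos n with rfl | hn
    · simp [Set.mapsTo_empty]
    rw [hs.monotoneOn.mapsTo_Icc_iff hn, hmono.mapsTo_Icc_iff hn, stretch_apply ⟨le_rfl, hn⟩,
      stretch_apply ⟨hn, le_rfl⟩, weakStepCount_one, weakStepCount_of_subset hT]
    omega
  constructor
  · rintro ⟨⟨-, hmaps⟩, hs⟩
    obtain ⟨hmono, hstrict⟩ := (strictMonoOn_stretch_iff hT).1 hs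
    exact ⟨⟨⟨hu, (hranges hmono hs).1 hmaps⟩, hmono⟩, hstrict⟩
  · rintro ⟨⟨⟨-, hmaps⟩, hmono⟩, hstrict⟩
    have hs := (strictMonoOn_stretch_iff hT).2 ⟨hmono, hstrict⟩
    exact ⟨⟨isWord_stretch, (hranges hmono hs).2 hmaps⟩, hs⟩

theorem isWord_unstretch {w : ℕ → ℕ} : IsWord n (unstretch n T w) :=
  fun _ hi => Set.indicator_of_notMem hi _

theorem stretch_unstretch {M : ℕ} {w : ℕ → ℕ} (hw : w ∈ strictWords n M) :
    stretch n T (unstretch n T w) = w := by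
  obtain ⟨⟨hword, hmaps⟩, hmono⟩ := hw
  funext i
  by_cases hi : i ∈ Set.Icc 1 n
  · have hwi := hmono.le_apply_of_one_le (hmaps 1 ⟨le_rfl, hi.1.trans hi.2⟩).1 hi
    rw [stretch_apply hi, unstretch, Set.indicator_of_mem hi]
    have := weakStepCount_le T i
    omega
  · rw [isWord_stretch i hi, hword i hi]

theorem image_stretch (hT : T ⊆ Finset.Icc 1 (n - 1)) :
    stretch n T '' {u | u ∈ WIgen n m ∧ ∀ i ∈ T, u i < u (i + 1)} =
      strictWords n (n + m - T.card - 1) := by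
  ext w
  constructor
  · rintro ⟨u, hu, rfl⟩
    exact (stretch_mem_strictWords_iff hT hu.1.1.1).2 hu
  · intro hw
    refine ⟨unstretch n T w, (stretch_mem_strictWords_iff hT isWord_unstretch).1 ?_,
      stretch_unstretch hw⟩
    rwa [stretch_unstretch hw]

theorem ncard_WIgen_strictAt (hT : T ⊆ Finset.Icc 1 (n - 1)) :
    {u | u ∈ WIgen n m ∧ ∀ i ∈ T, u i < u (i + 1)}.ncard = (n + m - T.card - 1).choose n := by
  rw [← ncard_strictWords, ← image_stretch hT,
    (stretch_injOn.mono fun u hu => hu.1.1.1).ncard_image]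

end Stretch

theorem desSet_subset_iff {n : ℕ} {u : ℕ → ℕ} {D : Finset ℕ} :
    desSet n u ⊆ D ↔ ∀ i ∈ Finset.Icc 1 (n - 1) \ D, u i < u (i + 1) := by
  constructor
  · intro h i hi
    obtain ⟨hi, hD⟩ := Finset.mem_sdiff.1 hi
    by_contra hle
    exact hD (h (Finset.mem_filter.2 ⟨hi, not_lt.1 hle⟩))
  · intro h i hi
    obtain ⟨hi, hle⟩ := Finset.mem_filter.1 hi
    by_contra hD
    exact not_lt.2 hle (h i (Finset.mem_sdiff.2 ⟨hi, hD⟩))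

theorem sdiff_desSet (n : ℕ) (v : ℕ → ℕ) : Finset.Icc 1 (n - 1) \ desSet n v = sascSet n v := by
  simp only [desSet, sascSet, ← Finset.filter_not, not_le]

theorem sdiff_sdesSet (n : ℕ) (v : ℕ → ℕ) : Finset.Icc 1 (n - 1) \ sdesSet n v = ascSet n v := by
  simp only [sdesSet, ascSet, ← Finset.filter_not, not_lt]

theorem stmt16_general (n : ℕ) (v : ℕ → ℕ) (m : ℕ) :
    Set.ncard {u : ℕ → ℕ | u ∈ WIgen n m ∧ desSet n u ⊆ desSet n v}
      = (n + m - sasc n v - 1).choose n ∧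
    Set.ncard {u : ℕ → ℕ | u ∈ WIgen n m ∧ desSet n u ⊆ sdesSet n v}
      = (n + m - asc n v - 1).choose n := by
  simp only [desSet_subset_iff, sdiff_desSet, sdiff_sdesSet]
  exact ⟨ncard_WIgen_strictAt (Finset.filter_subset _ _),
    ncard_WIgen_strictAt (Finset.filter_subset _ _)⟩

/-- Proposition 7.5: the number of weakly increasing maps
`u : {1,…,n} → {1,…,m}` with `Des(u) ⊆ Des(v)` is `C(n+m−asc∘(v)−1, n)`, and
with `Des(u) ⊆ Des∘(v)` it is `C(n+m−asc(v)−1, n)`. -/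
theorem stmt16 (n : ℕ) (hn : 1 ≤ n) (v : ℕ → ℕ) (hv : IsCayley n v) (m : ℕ) :
    Set.ncard {u : ℕ → ℕ | u ∈ WIgen n m ∧ desSet n u ⊆ desSet n v}
      = (n + m - sasc n v - 1).choose n ∧
    Set.ncard {u : ℕ → ℕ | u ∈ WIgen n m ∧ desSet n u ⊆ sdesSet n v}
      = (n + m - asc n v - 1).choose n :=
  stmt16_general n v m

end CayPaper
end
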